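/- arXiv:1904.08629 — 4 statements merged into one kernel-verified Lean document; each statement's English description precedes it below -/
import Mathlib

section
/- In the root system of type B_n (n ≤ 2) realized in ℤ^n, any two distinct subsets of the set of simple roots are not associate under the Weyl group W(B_n); that is, if w(I) = J for subsets I, J of the simple roots and some element w of W(B_n), then I = J. -/
/-- The simple roots of `B_n` realized in `ℤ^n` (0-indexed):
`α_i = e_i - e_{i+1}` for `i < n - 1`, and `α_{n-1} = e_{n-1}` (the short simple root). -/
def bsimple (n : ℕ) (i : Fin n) : Fin n → ℤ :=
  fun k => (if k = i then 1 else 0) + (if (k : ℕ) = (i : ℕ) + 1 then -1 else 0)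

/-- The action of a signed permutation (an element of `W(B_n) = S_n ⋉ {±1}^n`) on `ℤ^n`. -/
def signedPermAct (n : ℕ) (σ : Equiv.Perm (Fin n)) (ε : Fin n → ℤ) (v : Fin n → ℤ) :
    Fin n → ℤ := fun i => ε i * v (σ.symm i)

/-- squared norm -/
def nsq (n : ℕ) (v : Fin n → ℤ) : ℤ := ∑ i, v i ^ 2

lemma nsq_act (n : ℕ) (σ : Equiv.Perm (Fin n)) (ε : Fin n → ℤ)
    (hε : ∀ i, ε i = 1 ∨ ε i = -1) (v : Fin n → ℤ) :
    nsq n (signedPermAct n σ ε v) = nsq n v := by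
  unfold nsq signedPermAct
  have h1 : ∀ i, (ε i * v (σ.symm i)) ^ 2 = v (σ.symm i) ^ 2 := by
    intro i
    rcases hε i with h | h <;> rw [mul_pow, h] <;> ring
  rw [Finset.sum_congr rfl fun i _ => h1 i]
  exact Equiv.sum_comp σ.symm (fun i => v i ^ 2)

lemma nsq_bsimple_inj (n : ℕ) (hn : n ≤ 2) :
    ∀ i j : Fin n, nsq n (bsimple n i) = nsq n (bsimple n j) → i = j := by
  interval_cases n <;> decide

/-- For `n ≤ 2`, two subsets of the simple roots of `B_n` that are associate under the
Weyl group `W(B_n)` (the group of signed permutations) are equal. -/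
theorem stmt0 (n : ℕ) (hn : n ≤ 2) (I J : Finset (Fin n))
    (σ : Equiv.Perm (Fin n)) (ε : Fin n → ℤ) (hε : ∀ i, ε i = 1 ∨ ε i = -1)
    (hw : signedPermAct n σ ε '' (bsimple n '' (I : Set (Fin n))) =
      bsimple n '' (J : Set (Fin n))) :
    I = J := by
  ext i
  constructor
  · intro hi
    have : signedPermAct n σ ε (bsimple n i) ∈ bsimple n '' (J : Set (Fin n)) := by
      rw [← hw]; exact ⟨bsimple n i, ⟨i, hi, rfl⟩, rfl⟩
    obtain ⟨j, hj, hjeq⟩ := this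
    have : nsq n (bsimple n j) = nsq n (bsimple n i) := by
      rw [hjeq, nsq_act n σ ε hε]
    rwa [nsq_bsimple_inj n hn j i this] at hj
  · intro hj
    have : bsimple n i ∈ signedPermAct n σ ε '' (bsimple n '' (I : Set (Fin n))) := by
      rw [hw]; exact ⟨i, hj, rfl⟩
    obtain ⟨v, ⟨k, hk, hkeq⟩, hveq⟩ := this
    have : nsq n (bsimple n k) = nsq n (bsimple n i) := by
      rw [← hveq, ← hkeq, nsq_act n σ ε hε]
    rwa [nsq_bsimple_inj n hn k i this] at hk
end

section
/- Any two bases of a root system are conjugate under its Weyl group: if Δ and Δ' are two bases (sets of simple roots) of a reduced root system Φ in a Euclidean space, then there exists an element w of the Weyl group W(Φ) with w(Δ) = Δ'. -/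
/-!
Write `C(Δ)` for the additive monoid generated by `Δ`, so that the `Δ`-positive roots are
`Φ ∩ C(Δ)`. Extending `Δ` to a basis shows that `C(Δ)` is a pointed cone on which the
`Δ`-coordinates are nonnegative; with reducedness this makes the reflection `s_α` in a simple
root `α ∈ Δ` permute the `Δ`-positive roots other than `α`. Hence if some `α ∈ Δ` is
`Δ'`-negative, passing from `Δ` to `s_α Δ` removes exactly `α` from the finite set of roots that
are `Δ`-positive and `Δ'`-negative, and we conclude by induction on its size. When no simple
root of `Δ` is `Δ'`-negative, `C(Δ) = C(Δ')`, and each simple root, being indecomposable in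
this cone, lies in the other base; so `Δ = Δ'`.
-/

set_option linter.unusedSectionVars false

variable {V : Type*} [NormedAddCommGroup V] [InnerProductSpace ℝ V] [FiniteDimensional ℝ V]

/-- The Weyl group of a set `Φ` of roots in a Euclidean space: the subgroup of linear
automorphisms generated by the reflections `s_α`, `α ∈ Φ`,
where `s_α x = x - (2⟪x,α⟫/⟪α,α⟫) • α`. -/
def weylGroup (Φ : Set V) : Subgroup (V ≃ₗ[ℝ] V) :=
  Subgroup.closure
    {g | ∃ α ∈ Φ, ∀ x : V, g x = x - (2 * (inner ℝ x α : ℝ) / (inner ℝ α α : ℝ)) • α}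

/-- A base (set of simple roots) of `Φ`: a linearly independent subset of `Φ` such that every
root is a nonnegative-integer or nonpositive-integer combination of the base. -/
def IsBase (Φ Δ : Set V) : Prop :=
  Δ ⊆ Φ ∧ LinearIndependent ℝ ((↑) : Δ → V) ∧
    ∀ β ∈ Φ, (∃ c : Δ →₀ ℕ, β = c.sum fun a k => (k : ℝ) • (a : V)) ∨
      (∃ c : Δ →₀ ℕ, β = - c.sum fun a k => (k : ℝ) • (a : V))

lemma AddSubmonoid.eq_zero_or_exists_add_of_mem_closure {M : Type*} [AddCommMonoid M] {S : Set M}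
    {x : M} (hx : x ∈ AddSubmonoid.closure S) :
    x = 0 ∨ ∃ s ∈ S, ∃ y ∈ AddSubmonoid.closure S, x = s + y := by
  induction hx using AddSubmonoid.closure_induction with
  | mem s hs => exact .inr ⟨s, hs, 0, zero_mem _, (add_zero s).symm⟩
  | zero => exact .inl rfl
  | add x y _ hy hx' hy' =>
    rcases hx' with rfl | ⟨s, hs, z, hz, rfl⟩
    · simpa using hy'
    · exact .inr ⟨s, hs, z + y, add_mem hz hy, add_assoc s z y⟩

namespace Module.Basis

variable {K M ι : Type*} [Field K] [LinearOrder K] [IsStrictOrderedRing K]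
  [AddCommGroup M] [Module K M] (b : Basis ι K M)

lemma repr_nonneg_of_mem_closure {x : M} (hx : x ∈ AddSubmonoid.closure (Set.range b))
    (i : ι) : 0 ≤ b.repr x i := by
  classical
  induction hx using AddSubmonoid.closure_induction with
  | mem _ hx =>
    obtain ⟨j, rfl⟩ := hx
    rw [repr_self, Finsupp.single_apply]
    split_ifs <;> norm_num
  | zero => simp
  | add _ _ _ _ hx hy => simpa using add_nonneg hx hy

lemma eq_zero_of_mem_closure_of_neg_mem_closure {x : M}
    (hx : x ∈ AddSubmonoid.closure (Set.range b))
    (hnx : -x ∈ AddSubmonoid.closure (Set.range b)) : x = 0 :=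
  b.ext_elem fun i => by
    simpa using le_antisymm (by simpa using b.repr_nonneg_of_mem_closure hnx i)
      (b.repr_nonneg_of_mem_closure hx i)

lemma eq_repr_smul_of_add_eq_smul {x y : M} (hx : x ∈ AddSubmonoid.closure (Set.range b))
    (hy : y ∈ AddSubmonoid.closure (Set.range b)) {r : K} {i : ι} (h : x + y = r • b i) :
    x = b.repr x i • b i := by
  refine b.ext_elem fun j => ?_
  rcases eq_or_ne j i with rfl | hji
  · simp
  · have hsum := congr(b.repr $h j)
    simp only [map_add, Finsupp.add_apply, map_smul, repr_self, Finsupp.smul_apply,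
      Finsupp.single_eq_of_ne hji, smul_zero] at hsum
    simp only [map_smul, repr_self, Finsupp.smul_apply, Finsupp.single_eq_of_ne hji, smul_zero]
    linarith [b.repr_nonneg_of_mem_closure hx j, b.repr_nonneg_of_mem_closure hy j]

end Module.Basis

namespace LinearIndepOn

variable {K M : Type*} [Field K] [AddCommGroup M] [Module K M] {Δ : Set M}

lemma closure_le_closure_range_extend (hΔ : LinearIndepOn K id Δ) :
    AddSubmonoid.closure Δ ≤ AddSubmonoid.closure (Set.range (Module.Basis.extend hΔ)) :=
  AddSubmonoid.closure_mono (by rw [Module.Basis.range_extend]; exact hΔ.subset_extend _)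

variable [LinearOrder K] [IsStrictOrderedRing K]

lemma eq_zero_of_mem_closure_of_neg_mem_closure (hΔ : LinearIndepOn K id Δ) {x : M}
    (hx : x ∈ AddSubmonoid.closure Δ) (hnx : -x ∈ AddSubmonoid.closure Δ) : x = 0 :=
  (Module.Basis.extend hΔ).eq_zero_of_mem_closure_of_neg_mem_closure
    (hΔ.closure_le_closure_range_extend hx) (hΔ.closure_le_closure_range_extend hnx)

lemma exists_eq_smul_of_add_eq_smul (hΔ : LinearIndepOn K id Δ) {x y α : M} (hα : α ∈ Δ)
    (hx : x ∈ AddSubmonoid.closure Δ) (hy : y ∈ AddSubmonoid.closure Δ) {r : K}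
    (h : x + y = r • α) : ∃ t : K, x = t • α := by
  set b := Module.Basis.extend hΔ
  have hαb : b ⟨α, hΔ.subset_extend _ hα⟩ = α := Module.Basis.extend_apply_self hΔ _
  rw [← hαb] at h ⊢
  exact ⟨_, b.eq_repr_smul_of_add_eq_smul (hΔ.closure_le_closure_range_extend hx)
    (hΔ.closure_le_closure_range_extend hy) h⟩

end LinearIndepOn

section RootSystem

variable {E : Type*} [NormedAddCommGroup E] [InnerProductSpace ℝ E]

noncomputable def coroot (α : E) : Module.Dual ℝ E where
  toFun x := 2 * (inner ℝ x α : ℝ) / (inner ℝ α α : ℝ)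
  map_add' x y := by simp only [inner_add_left]; ring
  map_smul' t x := by simp only [real_inner_smul_left, RingHom.id_apply, smul_eq_mul]; ring

lemma coroot_apply_self {α : E} (hα : α ≠ 0) : coroot α α = 2 := by
  have : (inner ℝ α α : ℝ) ≠ 0 := inner_self_ne_zero.mpr hα
  change 2 * (inner ℝ α α : ℝ) / (inner ℝ α α : ℝ) = 2
  field_simp

noncomputable def rootReflection {α : E} (hα : α ≠ 0) : E ≃ₗ[ℝ] E :=
  Module.reflection (coroot_apply_self hα)

lemma rootReflection_apply {α : E} (hα : α ≠ 0) (x : E) :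
    rootReflection hα x = x - coroot α x • α :=
  Module.reflection_apply _ _

lemma rootReflection_apply_self {α : E} (hα : α ≠ 0) : rootReflection hα α = -α :=
  Module.reflection_apply_self _

lemma rootReflection_symm {α : E} (hα : α ≠ 0) : (rootReflection hα).symm = rootReflection hα :=
  Module.reflection_symm _

lemma rootReflection_rootReflection {α : E} (hα : α ≠ 0) (x : E) :
    rootReflection hα (rootReflection hα x) = x :=
  Module.involutive_reflection _ x

lemma rootReflection_mem_weylGroup {Φ : Set E} {α : E} (hαΦ : α ∈ Φ) (hα : α ≠ 0) :
    rootReflection hα ∈ weylGroup Φ :=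
  Subgroup.subset_closure ⟨α, hαΦ, rootReflection_apply hα⟩

lemma rootReflection_mem_iff {Φ : Set E} (hrefl : ∀ α ∈ Φ, ∀ β ∈ Φ, β - coroot α β • α ∈ Φ)
    {α : E} (hαΦ : α ∈ Φ) (hα : α ≠ 0) (β : E) : rootReflection hα β ∈ Φ ↔ β ∈ Φ := by
  refine ⟨fun h => ?_, fun h => rootReflection_apply hα β ▸ hrefl α hαΦ β h⟩
  have := hrefl α hαΦ _ h
  rwa [← rootReflection_apply hα, rootReflection_rootReflection] at this

lemma mem_closure_image_iff (g : E ≃ₗ[ℝ] E) {Δ : Set E} {β : E} :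
    β ∈ AddSubmonoid.closure (g '' Δ) ↔ g.symm β ∈ AddSubmonoid.closure Δ := by
  rw [← AddMonoidHom.map_mclosure, AddSubmonoid.mem_map]
  exact ⟨by rintro ⟨x, hx, rfl⟩; simpa using hx, fun h => ⟨_, h, by simp⟩⟩

lemma mem_closure_iff_exists_finsupp {Δ : Set E} {β : E} :
    β ∈ AddSubmonoid.closure Δ ↔ ∃ c : Δ →₀ ℕ, β = c.sum fun a k => (k : ℝ) • (a : E) := by
  conv_lhs => rw [← Subtype.range_coe (s := Δ)]
  simp only [AddSubmonoid.mem_closure_range_iff, Nat.cast_smul_eq_nsmul]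

lemma isBase_iff {Φ Δ : Set E} : IsBase Φ Δ ↔ Δ ⊆ Φ ∧ LinearIndepOn ℝ id Δ ∧
    ∀ β ∈ Φ, β ∈ AddSubmonoid.closure Δ ∨ -β ∈ AddSubmonoid.closure Δ := by
  simp only [IsBase, mem_closure_iff_exists_finsupp, neg_eq_iff_eq_neg]
  rfl

def separatingRoots (Φ Δ Δ' : Set E) : Set E :=
  {β ∈ Φ | β ∈ AddSubmonoid.closure Δ ∧ -β ∈ AddSubmonoid.closure Δ'}

namespace IsBase

variable {Φ Δ Δ' : Set E}

lemma subset (hΔ : IsBase Φ Δ) : Δ ⊆ Φ := hΔ.1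

lemma linearIndepOn (hΔ : IsBase Φ Δ) : LinearIndepOn ℝ id Δ := hΔ.2.1

lemma mem_closure_or_neg_mem_closure (hΔ : IsBase Φ Δ) {β : E} (hβ : β ∈ Φ) :
    β ∈ AddSubmonoid.closure Δ ∨ -β ∈ AddSubmonoid.closure Δ :=
  (isBase_iff.mp hΔ).2.2 β hβ

lemma image (hΔ : IsBase Φ Δ) (g : E ≃ₗ[ℝ] E) (hg : ∀ β, g β ∈ Φ ↔ β ∈ Φ) :
    IsBase Φ (g '' Δ) := by
  refine isBase_iff.mpr ⟨?_, hΔ.linearIndepOn.id_imageₛ g.injective.injOn, fun β hβ => ?_⟩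
  · rintro _ ⟨a, ha, rfl⟩
    exact (hg a).mpr (hΔ.subset ha)
  · simp only [mem_closure_image_iff, map_neg]
    exact hΔ.mem_closure_or_neg_mem_closure ((hg _).mp (by simpa using hβ))

lemma eq_of_add_eq_smul (h0 : (0 : E) ∉ Φ) (hred : ∀ α ∈ Φ, ∀ t : ℝ, t • α ∈ Φ → t = 1 ∨ t = -1)
    (hΔ : IsBase Φ Δ) {α x y : E} (hα : α ∈ Δ) (hxΦ : x ∈ Φ)
    (hx : x ∈ AddSubmonoid.closure Δ) (hy : y ∈ AddSubmonoid.closure Δ) {r : ℝ}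
    (h : x + y = r • α) : x = α := by
  obtain ⟨t, rfl⟩ := hΔ.linearIndepOn.exists_eq_smul_of_add_eq_smul hα hx hy h
  rcases hred α (hΔ.subset hα) t hxΦ with rfl | rfl
  · exact one_smul ℝ α
  · have hα0 : α = 0 := hΔ.linearIndepOn.eq_zero_of_mem_closure_of_neg_mem_closure
      (AddSubmonoid.subset_closure hα) (by simpa using hx)
    exact absurd (hα0 ▸ hΔ.subset hα) h0

lemma subset_of_subset_closure (h0 : (0 : E) ∉ Φ)
    (hred : ∀ α ∈ Φ, ∀ t : ℝ, t • α ∈ Φ → t = 1 ∨ t = -1) (hΔ : IsBase Φ Δ)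
    (hΔ'Φ : Δ' ⊆ Φ) (hΔ'Δ : Δ' ⊆ AddSubmonoid.closure Δ) (hΔΔ' : Δ ⊆ AddSubmonoid.closure Δ') :
    Δ ⊆ Δ' := by
  intro α hα
  rcases AddSubmonoid.eq_zero_or_exists_add_of_mem_closure (hΔΔ' hα) with h | ⟨b, hb, y, hy, hαby⟩
  · exact absurd (h ▸ hΔ.subset hα) h0
  · have hbα : b = α := hΔ.eq_of_add_eq_smul h0 hred hα (hΔ'Φ hb) (hΔ'Δ hb)
      (AddSubmonoid.closure_le.mpr hΔ'Δ hy) (r := 1) (by rw [one_smul, hαby])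
    exact hbα ▸ hb

lemma eq_of_subset_closure (h0 : (0 : E) ∉ Φ)
    (hred : ∀ α ∈ Φ, ∀ t : ℝ, t • α ∈ Φ → t = 1 ∨ t = -1) (hΔ : IsBase Φ Δ) (hΔ' : IsBase Φ Δ')
    (h : Δ ⊆ AddSubmonoid.closure Δ') : Δ = Δ' := by
  have h' : Δ' ⊆ AddSubmonoid.closure Δ := fun b hb =>
    (hΔ.mem_closure_or_neg_mem_closure (hΔ'.subset hb)).resolve_right fun hneg => by
      have hb0 : b = 0 := hΔ'.linearIndepOn.eq_zero_of_mem_closure_of_neg_mem_closure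
        (AddSubmonoid.subset_closure hb) (AddSubmonoid.closure_le.mpr h hneg)
      exact h0 (hb0 ▸ hΔ'.subset hb)
  exact (hΔ.subset_of_subset_closure h0 hred hΔ'.subset h' h).antisymm
    (hΔ'.subset_of_subset_closure h0 hred hΔ.subset h h')

lemma separatingRoots_image_rootReflection_ssubset (h0 : (0 : E) ∉ Φ)
    (hrefl : ∀ α ∈ Φ, ∀ β ∈ Φ, β - coroot α β • α ∈ Φ)
    (hred : ∀ α ∈ Φ, ∀ t : ℝ, t • α ∈ Φ → t = 1 ∨ t = -1) (hΔ : IsBase Φ Δ) (hΔ' : IsBase Φ Δ')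
    {α : E} (hα : α ∈ Δ) (hα0 : α ≠ 0) (hα' : -α ∈ AddSubmonoid.closure Δ') :
    separatingRoots Φ (rootReflection hα0 '' Δ) Δ' ⊂ separatingRoots Φ Δ Δ' := by
  have hαΔ' : α ∉ AddSubmonoid.closure Δ' := fun h =>
    hα0 (hΔ'.linearIndepOn.eq_zero_of_mem_closure_of_neg_mem_closure h hα')
  refine (Set.ssubset_iff_of_subset ?_).mpr
    ⟨α, ⟨hΔ.subset hα, AddSubmonoid.subset_closure hα, hα'⟩, fun ⟨_, hα₁, _⟩ => ?_⟩
  · rintro β ⟨hβΦ, hβ, hβ'⟩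
    rw [mem_closure_image_iff, rootReflection_symm] at hβ
    refine ⟨hβΦ, (hΔ.mem_closure_or_neg_mem_closure hβΦ).resolve_right fun hneg => ?_, hβ'⟩
    have hsβ : rootReflection hα0 β = α :=
      hΔ.eq_of_add_eq_smul h0 hred hα ((rootReflection_mem_iff hrefl (hΔ.subset hα) hα0 β).mpr hβΦ)
        hβ hneg (r := -coroot α β) (by rw [rootReflection_apply, neg_smul]; abel)
    have hβα : β = -α := by
      rw [← rootReflection_apply_self hα0, ← rootReflection_rootReflection hα0 β, hsβ]
    exact hαΔ' (by simpa [hβα] using hβ')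
  · rw [mem_closure_image_iff, rootReflection_symm, rootReflection_apply_self] at hα₁
    exact hα0 (hΔ.linearIndepOn.eq_zero_of_mem_closure_of_neg_mem_closure
      (AddSubmonoid.subset_closure hα) hα₁)

end IsBase

end RootSystem

/-- Any two bases of a reduced crystallographic root system are conjugate under its
Weyl group. -/
theorem stmt2 (Φ : Set V) (hfin : Φ.Finite) (h0 : (0 : V) ∉ Φ)
    (hrefl : ∀ α ∈ Φ, ∀ β ∈ Φ, β - (2 * (inner ℝ β α : ℝ) / (inner ℝ α α : ℝ)) • α ∈ Φ)
    (hred : ∀ α ∈ Φ, ∀ t : ℝ, t • α ∈ Φ → t = 1 ∨ t = -1)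
    (Δ Δ' : Set V) (hΔ : IsBase Φ Δ) (hΔ' : IsBase Φ Δ') :
    ∃ w ∈ weylGroup Φ, (⇑w) '' Δ = Δ' := by
  by_cases h : ∃ α ∈ Δ, -α ∈ AddSubmonoid.closure Δ'
  · obtain ⟨α, hα, hα'⟩ := h
    have hαΦ : α ∈ Φ := hΔ.subset hα
    have hα0 : α ≠ 0 := ne_of_mem_of_not_mem hαΦ h0
    have hdecr := hΔ.separatingRoots_image_rootReflection_ssubset h0 hrefl hred hΔ' hα hα0 hα'
    obtain ⟨w, hw, hwΔ⟩ := stmt2 Φ hfin h0 hrefl hred _ Δ'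
      (hΔ.image _ (rootReflection_mem_iff hrefl hαΦ hα0)) hΔ'
    refine ⟨w * rootReflection hα0, mul_mem hw (rootReflection_mem_weylGroup hαΦ hα0), ?_⟩
    rw [← hwΔ, ← Set.image_comp]
    rfl
  · push Not at h
    refine ⟨1, one_mem _, ?_⟩
    simpa using hΔ.eq_of_subset_closure h0 hred hΔ' fun α hα =>
      (hΔ'.mem_closure_or_neg_mem_closure (hΔ.subset hα)).resolve_right (h α hα)
termination_by (separatingRoots Φ Δ Δ').ncard
decreasing_by exact Set.ncard_lt_ncard hdecr (hfin.subset fun _ hβ => hβ.1)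
end

section
/- Let Φ be a root system of type A_n (Weyl group S_{n+1}) and let I, J be subsets of a fixed base Δ. If I and J are associate under W(A_n) = S_{n+1}, then the multisets of sizes of connected components of I and of J (as subsets of the Dynkin diagram A_n) are equal; conversely, if these multisets are equal, then I and J are associate under S_{n+1}. -/
/-- The connected component of `i` inside a subset `I` of the vertices `{0,...,n-1}` of the
Dynkin diagram `A_n` (a path): the set of `j ∈ I` such that the whole interval between `i`
and `j` lies in `I`. -/
def pathComp (I : Finset ℕ) (i : ℕ) : Finset ℕ :=
  I.filter fun j => Finset.Icc (min i j) (max i j) ⊆ I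

/-- The multiset of sizes of the connected components of a subset of the path `A_n`. -/
def compSizes (I : Finset ℕ) : Multiset ℕ :=
  (I.image fun i => pathComp I i).val.map Finset.card

/-- The simple root `α_{i+1} = e_i - e_{i+1}` of `A_n`, realized in `ℤ^{n+1}` (0-indexed). -/
def aroot (n : ℕ) (i : ℕ) : Fin (n + 1) → ℤ :=
  fun k => (if (k : ℕ) = i then 1 else 0) + (if (k : ℕ) = i + 1 then -1 else 0)

/-!
A permutation `σ` sends `α_i = e_i - e_{i+1}` to a simple root `α_j` exactly when `σ i = j` and
`σ (i + 1) = j + 1`. Along a string of consecutive roots it therefore acts as a translation, and it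
carries each component of `I` onto a component of `J` of the same size. Conversely, if the size
multisets agree, pair the components of equal size and translate each onto its partner: distinct
components are separated by a gap, so this is injective on the coordinates `{i, i + 1 : i ∈ I}`,
and an injection between subsets of `Fin (n + 1)` extends to a permutation.
-/

open Finset

section PathComponents

variable {I : Finset ℕ} {i j : ℕ}

theorem mem_pathComp : j ∈ pathComp I i ↔ uIcc i j ⊆ I :=
  mem_filter.trans (and_iff_right_of_imp fun h => h right_mem_uIcc)

theorem pathComp_subset : pathComp I i ⊆ I := filter_subset _ _

theorem self_mem_pathComp (hi : i ∈ I) : i ∈ pathComp I i := by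
  simpa [mem_pathComp] using hi

theorem pathComp_eq_of_mem (hj : j ∈ pathComp I i) : pathComp I j = pathComp I i := by
  ext k
  simp only [mem_pathComp] at hj ⊢
  constructor
  · exact fun hk => uIcc_subset_uIcc_union_uIcc.trans (union_subset hj hk)
  · exact fun hk => uIcc_subset_uIcc_union_uIcc.trans (union_subset (uIcc_comm i j ▸ hj) hk)

theorem pathComp_succ (hi : i ∈ I) (hi1 : i + 1 ∈ I) : pathComp I (i + 1) = pathComp I i :=
  pathComp_eq_of_mem <| mem_pathComp.2 fun m hm => by
    rw [mem_uIcc] at hm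
    rcases (by omega : m = i ∨ m = i + 1) with rfl | rfl <;> assumption

theorem exists_pathComp_eq_Icc (hi : i ∈ I) : ∃ a k, pathComp I i = Icc a (a + k) := by
  set C := pathComp I i
  have hC : C.Nonempty := ⟨i, self_mem_pathComp hi⟩
  have ha : uIcc i (C.min' hC) ⊆ I := mem_pathComp.1 (min'_mem C hC)
  have hb : uIcc i (C.max' hC) ⊆ I := mem_pathComp.1 (max'_mem C hC)
  have hai : C.min' hC ≤ i := min'_le C i (self_mem_pathComp hi)
  have hib : i ≤ C.max' hC := le_max' C i (self_mem_pathComp hi)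
  have hIcc : Icc (C.min' hC) (C.max' hC) ⊆ I := by
    rw [← uIcc_of_le (hai.trans hib)]
    exact uIcc_subset_uIcc_union_uIcc.trans (union_subset (uIcc_comm i _ ▸ ha) hb)
  refine ⟨C.min' hC, C.max' hC - C.min' hC, ?_⟩
  rw [Nat.add_sub_cancel' (hai.trans hib)]
  exact Subset.antisymm (fun k hk => mem_Icc.2 ⟨min'_le C k hk, le_max' C k hk⟩)
    fun k hk => mem_pathComp.2 ((uIcc_subset_Icc (mem_Icc.2 ⟨hai, hib⟩) hk).trans hIcc)

end PathComponents

section ComponentSizes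

variable {I : Finset ℕ} {i : ℕ}

theorem pathComp_sdiff_pathComp {j : ℕ} (hj : j ∈ I \ pathComp I i) :
    pathComp (I \ pathComp I i) j = pathComp I j := by
  ext k
  simp only [mem_pathComp]
  refine ⟨fun h => h.trans sdiff_subset, fun h m hm => mem_sdiff.2 ⟨h hm, fun hmC => ?_⟩⟩
  have hjm : j ∈ pathComp I m :=
    mem_pathComp.2 ((uIcc_subset_uIcc (mem_uIcc.2 (by rw [mem_uIcc] at hm; omega))
      left_mem_uIcc).trans h)
  exact (mem_sdiff.1 hj).2 (pathComp_eq_of_mem hmC ▸ hjm)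

theorem compSizes_eq_cons (hi : i ∈ I) :
    compSizes I = #(pathComp I i) ::ₘ compSizes (I \ pathComp I i) := by
  set C := pathComp I i
  have himage : I.image (pathComp I) = insert C ((I \ C).image (pathComp (I \ C))) := by
    ext T
    simp only [mem_image, mem_insert]
    constructor
    · rintro ⟨x, hx, rfl⟩
      by_cases hxC : x ∈ C
      · exact Or.inl (pathComp_eq_of_mem hxC)
      · have hx' : x ∈ I \ C := mem_sdiff.2 ⟨hx, hxC⟩
        exact Or.inr ⟨x, hx', pathComp_sdiff_pathComp hx'⟩
    · rintro (rfl | ⟨x, hx, rfl⟩)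
      · exact ⟨i, hi, rfl⟩
      · exact ⟨x, (mem_sdiff.1 hx).1, (pathComp_sdiff_pathComp hx).symm⟩
  have hC : C ∉ (I \ C).image (pathComp (I \ C)) := by
    intro hmem
    obtain ⟨x, hx, hxC⟩ := mem_image.1 hmem
    exact (mem_sdiff.1 hx).2 (hxC ▸ self_mem_pathComp hx)
  rw [compSizes, himage, insert_val_of_notMem hC, Multiset.map_cons]
  rfl

theorem compSizes_eq_zero : compSizes I = 0 ↔ I = ∅ := by
  rw [compSizes, Multiset.map_eq_zero, val_eq_zero, image_eq_empty]

theorem mem_compSizes {k : ℕ} : k ∈ compSizes I ↔ ∃ i ∈ I, #(pathComp I i) = k := by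
  simp [compSizes]

end ComponentSizes

section PermInvariance

variable {I : Finset ℕ} (τ : Equiv.Perm ℕ)

theorem map_pathComp_subset (hτ : ∀ i ∈ I, τ (i + 1) = τ i + 1) (i : ℕ) :
    (pathComp I i).map τ.toEmbedding ⊆ pathComp (I.map τ.toEmbedding) (τ i) := by
  intro y hy
  obtain ⟨j, hj, rfl⟩ := mem_map.1 hy
  rw [mem_pathComp] at hj ⊢
  rw [Equiv.coe_toEmbedding]
  set a := min i j
  have hlin : ∀ t ≤ max i j - a, τ (a + t) = τ a + t := by
    intro t
    induction t with
    | zero => simp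
    | succ t ih =>
      intro ht
      rw [← add_assoc, hτ _ (hj (mem_uIcc.2 (by omega))), ih (by omega), add_assoc]
  have hi := hlin (i - a) (by omega)
  have hj' := hlin (j - a) (by omega)
  rw [show a + (i - a) = i by omega] at hi
  rw [show a + (j - a) = j by omega] at hj'
  intro m hm
  rw [mem_uIcc] at hm
  refine mem_map.2 ⟨a + (m - τ a), hj (mem_uIcc.2 (by omega)), ?_⟩
  rw [Equiv.coe_toEmbedding, hlin _ (by omega)]
  omega

theorem map_pathComp (hτ : ∀ i ∈ I, τ (i + 1) = τ i + 1) (i : ℕ) :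
    (pathComp I i).map τ.toEmbedding = pathComp (I.map τ.toEmbedding) (τ i) := by
  refine (map_pathComp_subset τ hτ i).antisymm ?_
  have hτinv : ∀ j ∈ I.map τ.toEmbedding, τ.symm (j + 1) = τ.symm j + 1 := by
    intro j hj
    obtain ⟨i, hi, rfl⟩ := mem_map.1 hj
    simp [← hτ i hi]
  intro y hy
  have h := map_pathComp_subset τ.symm hτinv (τ i) (mem_map_of_mem _ hy)
  rw [map_map, Function.Embedding.equiv_toEmbedding_trans_symm_toEmbedding, map_refl,
    Equiv.symm_apply_apply] at h
  exact mem_map_equiv.2 h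

theorem compSizes_map (hτ : ∀ i ∈ I, τ (i + 1) = τ i + 1) :
    compSizes (I.map τ.toEmbedding) = compSizes I := by
  have himage : (I.map τ.toEmbedding).image (pathComp (I.map τ.toEmbedding)) =
      (I.image (pathComp I)).image (map τ.toEmbedding) := by
    rw [image_image]
    ext T
    simp only [mem_image, mem_map, Function.comp_apply, Equiv.coe_toEmbedding]
    constructor
    · rintro ⟨_, ⟨i, hi, rfl⟩, rfl⟩
      exact ⟨i, hi, map_pathComp τ hτ i⟩
    · rintro ⟨i, hi, rfl⟩
      exact ⟨τ i, ⟨i, hi, rfl⟩, (map_pathComp τ hτ i).symm⟩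
  rw [compSizes, himage, image_val_of_injOn (map_injective _).injOn, Multiset.map_map]
  simp only [compSizes, Function.comp_def, card_map]

end PermInvariance

section Matchings

def rootSupport (I : Finset ℕ) : Finset ℕ := I ∪ I.image (· + 1)

/-- The action on coordinates of a permutation that carries `α_i` to `α_{f i}` for `i ∈ I`. -/
structure IsRootMatching (f : ℕ → ℕ) (I J : Finset ℕ) : Prop where
  injOn : Set.InjOn f (rootSupport I)
  map_succ : ∀ i ∈ I, f (i + 1) = f i + 1
  image_eq : I.image f = J

variable {I J : Finset ℕ} {f : ℕ → ℕ}

theorem mem_rootSupport {x : ℕ} : x ∈ rootSupport I ↔ x ∈ I ∨ ∃ i ∈ I, i + 1 = x := by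
  simp [rootSupport]

theorem rootSupport_union (I₁ I₂ : Finset ℕ) :
    rootSupport (I₁ ∪ I₂) = rootSupport I₁ ∪ rootSupport I₂ := by
  ext x
  simp only [mem_rootSupport, mem_union]
  grind

theorem rootSupport_Icc (a k : ℕ) : rootSupport (Icc a (a + k)) = Icc a (a + k + 1) := by
  ext x
  simp only [mem_rootSupport, mem_Icc]
  constructor
  · rintro (h | ⟨y, hy, rfl⟩) <;> omega
  · intro h
    by_cases hx : x = a + k + 1
    · exact Or.inr ⟨a + k, by omega, hx.symm⟩
    · exact Or.inl (by omega)

theorem subset_rootSupport : I ⊆ rootSupport I := subset_union_left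

theorem succ_mem_rootSupport {i : ℕ} (hi : i ∈ I) : i + 1 ∈ rootSupport I :=
  mem_rootSupport.2 (Or.inr ⟨i, hi, rfl⟩)

theorem IsRootMatching.mapsTo (hf : IsRootMatching f I J) {x : ℕ} (hx : x ∈ rootSupport I) :
    f x ∈ rootSupport J := by
  rw [← hf.image_eq, mem_rootSupport]
  rcases mem_rootSupport.1 hx with hx | ⟨i, hi, rfl⟩
  · exact Or.inl (mem_image_of_mem f hx)
  · exact Or.inr ⟨f i, mem_image_of_mem f hi, (hf.map_succ i hi).symm⟩

theorem isRootMatching_Icc (a c k : ℕ) :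
    IsRootMatching (fun x => x - a + c) (Icc a (a + k)) (Icc c (c + k)) where
  injOn x hx y hy hxy := by
    rw [mem_coe, rootSupport_Icc, mem_Icc] at hx hy
    simp only at hxy
    omega
  map_succ i hi := by
    rw [mem_Icc] at hi
    omega
  image_eq := by
    ext y
    simp only [mem_image, mem_Icc]
    exact ⟨by rintro ⟨x, hx, rfl⟩; omega, fun hy => ⟨y - c + a, by omega, by omega⟩⟩

theorem IsRootMatching.union {I₁ I₂ J₁ J₂ : Finset ℕ} {g : ℕ → ℕ}
    (hf : IsRootMatching f I₁ J₁) (hg : IsRootMatching g I₂ J₂)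
    (hI : Disjoint (rootSupport I₁) (rootSupport I₂))
    (hJ : Disjoint (rootSupport J₁) (rootSupport J₂)) :
    IsRootMatching (fun x => if x ∈ rootSupport I₁ then f x else g x)
      (I₁ ∪ I₂) (J₁ ∪ J₂) := by
  set F := fun x => if x ∈ rootSupport I₁ then f x else g x
  have hF₁ : Set.EqOn F f (rootSupport I₁) := fun x hx => if_pos hx
  have hF₂ : Set.EqOn F g (rootSupport I₂) := fun x hx => if_neg (disjoint_right.1 hI hx)
  refine ⟨?_, ?_, ?_⟩
  · rw [rootSupport_union, coe_union, Set.injOn_union (disjoint_coe.2 hI)]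
    refine ⟨hf.injOn.congr hF₁.symm, hg.injOn.congr hF₂.symm, fun x hx y hy hxy => ?_⟩
    rw [hF₁ hx, hF₂ hy] at hxy
    exact disjoint_left.1 hJ (hf.mapsTo hx) (hxy ▸ hg.mapsTo hy)
  · intro i hi
    rcases mem_union.1 hi with hi | hi
    · rw [hF₁ (succ_mem_rootSupport hi), hF₁ (subset_rootSupport hi), hf.map_succ i hi]
    · rw [hF₂ (succ_mem_rootSupport hi), hF₂ (subset_rootSupport hi), hg.map_succ i hi]
  · rw [image_union, image_congr (hF₁.mono (coe_subset.2 subset_rootSupport)),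
      image_congr (hF₂.mono (coe_subset.2 subset_rootSupport)), hf.image_eq, hg.image_eq]

theorem disjoint_rootSupport_pathComp_sdiff {i : ℕ} (hi : i ∈ I) :
    Disjoint (rootSupport (pathComp I i)) (rootSupport (I \ pathComp I i)) := by
  obtain ⟨a, k, hC⟩ := exists_pathComp_eq_Icc hi
  have hmem : ∀ m ∈ pathComp I i, pathComp I m = Icc a (a + k) := fun m hm =>
    (pathComp_eq_of_mem hm).trans hC
  have ha : a ∈ pathComp I i := hC ▸ mem_Icc.2 ⟨le_rfl, by omega⟩
  have hb : a + k ∈ pathComp I i := hC ▸ mem_Icc.2 ⟨by omega, le_rfl⟩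
  have hpred : ∀ x ∈ I, x + 1 ≠ a := by
    rintro x hx rfl
    have := self_mem_pathComp hx
    rw [← pathComp_succ hx (pathComp_subset ha), hmem _ ha, mem_Icc] at this
    omega
  have hsucc : a + k + 1 ∉ I := by
    intro hx
    have := self_mem_pathComp hx
    rw [pathComp_succ (pathComp_subset hb) hx, hmem _ hb, mem_Icc] at this
    omega
  rw [disjoint_right]
  intro x hx hxC
  rw [hC, rootSupport_Icc, mem_Icc] at hxC
  rcases mem_rootSupport.1 hx with hx | ⟨y, hy, rfl⟩
  · rw [mem_sdiff, hC, mem_Icc] at hx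
    exact hsucc (by rw [show a + k + 1 = x by omega]; exact hx.1)
  · rw [mem_sdiff, hC, mem_Icc] at hy
    exact hpred y hy.1 (by omega)

theorem exists_isRootMatching_of_compSizes_eq (h : compSizes I = compSizes J) :
    ∃ f, IsRootMatching f I J := by
  induction I using Finset.strongInduction generalizing J with
  | H I ih =>
  rcases I.eq_empty_or_nonempty with rfl | ⟨i, hi⟩
  · obtain rfl : J = ∅ := compSizes_eq_zero.1 (h ▸ compSizes_eq_zero.2 rfl)
    exact ⟨id, Set.injOn_id _, by simp, by simp⟩
  have hmem : #(pathComp I i) ∈ compSizes J :=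
    h ▸ compSizes_eq_cons hi ▸ Multiset.mem_cons_self _ _
  obtain ⟨j, hj, hcard⟩ := mem_compSizes.1 hmem
  have hrest : compSizes (I \ pathComp I i) = compSizes (J \ pathComp J j) := by
    rw [compSizes_eq_cons hi, compSizes_eq_cons hj, hcard, Multiset.cons_inj_right] at h
    exact h
  obtain ⟨f, hf⟩ := ih _ (sdiff_ssubset pathComp_subset ⟨i, self_mem_pathComp hi⟩) hrest
  obtain ⟨a, k, hIk⟩ := exists_pathComp_eq_Icc hi
  obtain ⟨c, l, hJl⟩ := exists_pathComp_eq_Icc hj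
  obtain rfl : l = k := by
    rw [hIk, hJl, Nat.card_Icc, Nat.card_Icc] at hcard
    omega
  have := (isRootMatching_Icc a c l).union hf (hIk ▸ disjoint_rootSupport_pathComp_sdiff hi)
    (hJl ▸ disjoint_rootSupport_pathComp_sdiff hj)
  rw [← hIk, ← hJl, union_sdiff_of_subset pathComp_subset,
    union_sdiff_of_subset pathComp_subset] at this
  exact ⟨_, this⟩

end Matchings

section WeylGroup

variable {n : ℕ} (σ : Equiv.Perm (Fin (n + 1)))

theorem extendDomain_equivSubtype_apply {m : ℕ} (hm : m < n + 1) :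
    σ.extendDomain Fin.equivSubtype m = σ ⟨m, hm⟩ := by
  rw [Equiv.Perm.extendDomain_apply_subtype σ Fin.equivSubtype hm]
  rfl

theorem aroot_comp_symm_eq_aroot_iff {i j : ℕ} (hi : i < n) :
    (fun k => aroot n i (σ.symm k)) = aroot n j ↔
      σ.extendDomain Fin.equivSubtype i = j ∧
        σ.extendDomain Fin.equivSubtype (i + 1) = j + 1 := by
  rw [extendDomain_equivSubtype_apply σ (by omega : i < n + 1),
    extendDomain_equivSubtype_apply σ (by omega : i + 1 < n + 1)]
  constructor
  · intro h
    have hp := congrFun h (σ ⟨i, by omega⟩)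
    have hq := congrFun h (σ ⟨i + 1, by omega⟩)
    simp only [aroot, Equiv.symm_apply_apply] at hp hq
    split_ifs at hp hq <;> omega
  · rintro ⟨hp, hq⟩
    funext k
    obtain ⟨m, rfl⟩ := σ.surjective k
    have h₁ : (m : ℕ) = i ↔ (σ m : ℕ) = j := by
      rw [← hp, Fin.val_inj, σ.injective.eq_iff, Fin.ext_iff]
    have h₂ : (m : ℕ) = i + 1 ↔ (σ m : ℕ) = j + 1 := by
      rw [← hq, Fin.val_inj, σ.injective.eq_iff, Fin.ext_iff]
    simp only [aroot, Equiv.symm_apply_apply, h₁, h₂]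

variable {I J : Finset ℕ}

theorem map_succ_and_map_eq_of_image_aroot_eq (hI : I ⊆ range n)
    (hσ : (fun v : Fin (n + 1) → ℤ => fun k => v (σ.symm k)) '' (aroot n '' (I : Set ℕ)) =
      aroot n '' (J : Set ℕ)) :
    (∀ i ∈ I,
        σ.extendDomain Fin.equivSubtype (i + 1) = σ.extendDomain Fin.equivSubtype i + 1) ∧
      I.map (σ.extendDomain Fin.equivSubtype).toEmbedding = J := by
  have hroot (i : ℕ) (hi : i ∈ I) {j : ℕ}
      (hij : (fun k => aroot n i (σ.symm k)) = aroot n j) :=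
    (aroot_comp_symm_eq_aroot_iff σ (mem_range.1 (hI hi))).1 hij
  have hfwd : ∀ i ∈ I, ∃ j ∈ J, (fun k => aroot n i (σ.symm k)) = aroot n j := by
    intro i hi
    obtain ⟨j, hj, hji⟩ : (fun k => aroot n i (σ.symm k)) ∈ aroot n '' (J : Set ℕ) :=
      hσ ▸ Set.mem_image_of_mem _ (Set.mem_image_of_mem _ hi)
    exact ⟨j, hj, hji.symm⟩
  refine ⟨fun i hi => ?_, ?_⟩
  · obtain ⟨j, -, hij⟩ := hfwd i hi
    rw [(hroot i hi hij).1, (hroot i hi hij).2]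
  ext j
  rw [mem_map]
  constructor
  · rintro ⟨i, hi, rfl⟩
    obtain ⟨j, hj, hij⟩ := hfwd i hi
    rwa [Equiv.coe_toEmbedding, (hroot i hi hij).1]
  · intro hj
    obtain ⟨_, ⟨i, hi, rfl⟩, hij⟩ :
        aroot n j ∈
          (fun v : Fin (n + 1) → ℤ => fun k => v (σ.symm k)) '' (aroot n '' (I : Set ℕ)) :=
      hσ ▸ Set.mem_image_of_mem _ hj
    exact ⟨i, hi, (hroot i hi hij).1⟩

end WeylGroup

section Realization

variable {n : ℕ} {I J : Finset ℕ} {f : ℕ → ℕ}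

theorem rootSupport_subset_range (hI : I ⊆ range n) : rootSupport I ⊆ range (n + 1) := by
  intro x hx
  rcases mem_rootSupport.1 hx with hx | ⟨i, hi, rfl⟩
  · exact mem_range.2 (Nat.lt_succ_of_lt (mem_range.1 (hI hx)))
  · exact mem_range.2 (Nat.succ_lt_succ (mem_range.1 (hI hi)))

theorem IsRootMatching.exists_perm (hf : IsRootMatching f I J) (hI : I ⊆ range n)
    (hJ : J ⊆ range n) :
    ∃ σ : Equiv.Perm (Fin (n + 1)),
      ∀ x ∈ rootSupport I, σ.extendDomain Fin.equivSubtype x = f x := by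
  have hbound {x : ℕ} (hx : x ∈ rootSupport I) : x < n + 1 :=
    mem_range.1 (rootSupport_subset_range hI hx)
  have hbound' {x : ℕ} (hx : x ∈ rootSupport I) : f x < n + 1 :=
    mem_range.1 (rootSupport_subset_range hJ (hf.mapsTo hx))
  obtain ⟨σ, hσ⟩ := Equiv.Perm.exists_extending_pair
    (fun x : rootSupport I => (⟨x, hbound x.2⟩ : Fin (n + 1)))
    (fun x => ⟨f x, hbound' x.2⟩)
    (fun x y hxy => Subtype.ext (Fin.mk.inj_iff.1 hxy))
    (fun x y hxy => Subtype.ext (hf.injOn x.2 y.2 (Fin.mk.inj_iff.1 hxy)))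
  refine ⟨σ, fun x hx => ?_⟩
  rw [extendDomain_equivSubtype_apply σ (hbound hx), hσ ⟨x, hx⟩]

theorem IsRootMatching.image_aroot_eq {σ : Equiv.Perm (Fin (n + 1))} (hf : IsRootMatching f I J)
    (hI : I ⊆ range n) (hσ : ∀ x ∈ rootSupport I, σ.extendDomain Fin.equivSubtype x = f x) :
    (fun v : Fin (n + 1) → ℤ => fun k => v (σ.symm k)) '' (aroot n '' (I : Set ℕ)) =
      aroot n '' (J : Set ℕ) := by
  rw [Set.image_image, ← hf.image_eq, coe_image, Set.image_image]
  refine Set.image_congr fun i hi => (aroot_comp_symm_eq_aroot_iff σ (mem_range.1 (hI hi))).2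
    ⟨hσ i (subset_rootSupport hi), ?_⟩
  rw [hσ _ (succ_mem_rootSupport hi), hf.map_succ i hi]

end Realization

/-- Two subsets `I, J` of the base of `A_n` are associate under the Weyl group
`W(A_n) = S_{n+1}` (acting by permuting the coordinates of `ℤ^{n+1}`) if and only if the
multisets of sizes of their connected components in the Dynkin diagram coincide. -/
theorem stmt7 (n : ℕ) (I J : Finset ℕ) (hI : I ⊆ Finset.range n) (hJ : J ⊆ Finset.range n) :
    (∃ σ : Equiv.Perm (Fin (n + 1)),
        (fun v : Fin (n + 1) → ℤ => fun k => v (σ.symm k)) '' (aroot n '' (I : Set ℕ)) =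
          aroot n '' (J : Set ℕ)) ↔
      compSizes I = compSizes J := by
  constructor
  · rintro ⟨σ, hσ⟩
    obtain ⟨hsucc, hmap⟩ := map_succ_and_map_eq_of_image_aroot_eq σ hI hσ
    rw [← hmap, compSizes_map _ hsucc]
  · intro h
    obtain ⟨f, hf⟩ := exists_isRootMatching_of_compSizes_eq h
    obtain ⟨σ, hσ⟩ := hf.exists_perm hI hJ
    exact ⟨σ, hf.image_aroot_eq hI hσ⟩
end

section
/- Let D be the Dynkin diagram of type B_n (n > 2) with long simple roots α_1,...,α_{n-1} and short simple root α_n, and let I, J be subsets of the simple roots with I ≠ Δ ≠ J. Let m be minimal with α_{n-m} ∉ I. If w ∈ W(B_n) satisfies w(I) = J, then w fixes α_{n-j} for all j < m, α_{n-m} ∉ J, and w lies in the subgroup W(B_{n-m}) fixing e_{n-m+1},...,e_n (when m ≥ 1, w fixes each of α_{n-m+1},...,α_n). -/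
/-- The standard basis vector `e_i` of `ℤ^n`. -/
def stdbasis (n : ℕ) (i : Fin n) : Fin n → ℤ := fun k => if k = i then 1 else 0

private lemma bs_apply (n : ℕ) (i k : Fin n) :
    bsimple n i k =
      if (k : ℕ) = (i : ℕ) then 1 else if (k : ℕ) = (i : ℕ) + 1 then (-1:ℤ) else 0 := by
  have hk := k.isLt
  have hi := i.isLt
  simp only [bsimple, Fin.ext_iff]
  split_ifs <;> omega

set_option maxHeartbeats 4000000 in
/-- In `B_n` (`n > 2`, 1-indexed roots `α_1,…,α_n` corresponding to indices `0,…,n-1`), let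
`I, J` be proper subsets of the simple roots and `m` minimal with `α_{n-m} ∉ I`.  If
`w ∈ W(B_n)` maps the roots of `I` onto those of `J`, then `w` fixes `α_{n-j}` for all
`j < m`, `α_{n-m} ∉ J`, and `w` lies in `W(B_{n-m})`, i.e. fixes `e_i` for all `i ≥ n-m`. -/
theorem stmt12 (n : ℕ) (hn : 2 < n) (I J : Finset (Fin n))
    (hI : I ≠ Finset.univ) (hJ : J ≠ Finset.univ)
    (m : ℕ) (hm : m < n)
    (hmin : (⟨n - 1 - m, by omega⟩ : Fin n) ∉ I)
    (hlt : ∀ j < m, (⟨n - 1 - j, by omega⟩ : Fin n) ∈ I)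
    (σ : Equiv.Perm (Fin n)) (ε : Fin n → ℤ) (hε : ∀ i, ε i = 1 ∨ ε i = -1)
    (hw : signedPermAct n σ ε '' (bsimple n '' (I : Set (Fin n))) =
      bsimple n '' (J : Set (Fin n))) :
    (∀ j < m, signedPermAct n σ ε (bsimple n ⟨n - 1 - j, by omega⟩) =
        bsimple n ⟨n - 1 - j, by omega⟩) ∧
    (⟨n - 1 - m, by omega⟩ : Fin n) ∉ J ∧
    (∀ i : Fin n, n - m ≤ (i : ℕ) →
      signedPermAct n σ ε (stdbasis n i) = stdbasis n i) := by
  -- key claim: σ fixes every index of the form n-1-j (j < m), with ε = 1 there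
  have key : ∀ j, j < m → ∀ x : Fin n, (x:ℕ) = n-1-j → σ x = x ∧ ε x = 1 := by
    intro j
    induction j using Nat.strong_induction_on with
    | _ j IH =>
      intro hj x hx
      have hjn : j < n := lt_trans hj hm
      have hxlt := x.isLt
      have hxI : x ∈ I := by
        have hxe : x = ⟨n-1-j, by omega⟩ := Fin.ext hx
        rw [hxe]; exact hlt j hj
      have hmem : signedPermAct n σ ε (bsimple n x) ∈ bsimple n '' (J : Set (Fin n)) := by
        rw [← hw]; exact ⟨_, ⟨_, hxI, rfl⟩, rfl⟩
      obtain ⟨l, hlJ, hl⟩ := hmem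
      -- hl : bsimple n l = signedPermAct n σ ε (bsimple n x)
      have hll := l.isLt
      rcases Nat.eq_zero_or_pos j with rfl | hj1
      · -- j = 0 : x is the short root index n-1
        have h1 : ((σ.symm l : Fin n) : ℕ) = (x:ℕ) := by
          have h0 : bsimple n l l = ε l * bsimple n x (σ.symm l) := congrFun hl l
          have hsl := (σ.symm l).isLt
          by_contra hc
          simp only [bs_apply] at h0
          split_ifs at h0 <;> rcases hε l with hh | hh <;> simp only [hh] at h0 <;> omega
        have h1' : σ.symm l = x := Fin.ext h1
        -- rule out (l:ℕ) < n-1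
        have hln : (l:ℕ) = n-1 := by
          by_contra hc
          have hl2 : (l:ℕ)+1 < n := by omega
          obtain ⟨t, ht⟩ : ∃ t : Fin n, t = ⟨(l:ℕ)+1, hl2⟩ := ⟨_, rfl⟩
          have htv : (t:ℕ) = (l:ℕ)+1 := by rw [ht]
          have h0 : bsimple n l t = ε t * bsimple n x (σ.symm t) := congrFun hl t
          have hst := (σ.symm t).isLt
          have h2 : ((σ.symm t : Fin n) : ℕ) = (x:ℕ) := by
            by_contra hc2
            simp only [bs_apply] at h0
            split_ifs at h0 <;> rcases hε t with hh | hh <;> simp only [hh] at h0 <;> omega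
          have h3 : σ.symm t = σ.symm l := Fin.ext (by omega)
          have h4 := σ.symm.injective h3
          rw [Fin.ext_iff] at h4
          omega
        have hlx : l = x := Fin.ext (by omega)
        have hfix : σ x = x := by
          have h5 := Equiv.apply_symm_apply σ l
          rw [h1', hlx] at h5
          exact h5
        refine ⟨hfix, ?_⟩
        have h0 : bsimple n l l = ε l * bsimple n x (σ.symm l) := congrFun hl l
        rw [h1'] at h0
        simp only [bs_apply] at h0
        rcases hε l with hh | hh
        · rw [hlx] at hh; exact hh
        · exfalso
          simp only [hh] at h0
          split_ifs at h0 <;> omega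
      · -- j ≥ 1
        obtain ⟨b, hb⟩ : ∃ b : Fin n, b = ⟨n-j, by omega⟩ := ⟨_, rfl⟩
        have hbv : (b:ℕ) = n-j := by rw [hb]
        have hprev := IH (j-1) (by omega) (by omega) b (by omega)
        have hsb : σ.symm b = b := by rw [Equiv.symm_apply_eq, hprev.1]
        -- evaluate at b : get (l:ℕ) = n-1-j
        have hlval : (l:ℕ) = n-1-j := by
          have h0 : bsimple n l b = ε b * bsimple n x (σ.symm b) := congrFun hl b
          simp only [hsb, hprev.2, one_mul, bs_apply] at h0
          split_ifs at h0 <;> omega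
        -- σ x ≠ b
        have hpb : σ x ≠ b := by
          intro hcon
          have hxb := σ.injective (hcon.trans hprev.1.symm)
          rw [hxb] at hx
          omega
        -- evaluate at σ x
        have h0 : bsimple n l (σ x) = ε (σ x) * bsimple n x (σ.symm (σ x)) := congrFun hl (σ x)
        simp only [Equiv.symm_apply_apply, bs_apply] at h0
        have hplt := (σ x).isLt
        have hpbv : ((σ x : Fin n):ℕ) ≠ n-j := fun hcon => hpb (Fin.ext (by omega))
        have hcase : ((σ x : Fin n):ℕ) = n-1-j := by
          rcases hε (σ x) with hh | hh <;> simp only [hh] at h0 <;>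
            split_ifs at h0 <;> omega
        have hfix : σ x = x := Fin.ext (by omega)
        refine ⟨hfix, ?_⟩
        rcases hε (σ x) with hh | hh
        · rw [hfix] at hh; exact hh
        · exfalso
          simp only [hh] at h0
          split_ifs at h0 <;> omega
  -- σ fixes all indices ≥ n-m, with ε = 1 there
  have efix : ∀ x : Fin n, n - m ≤ (x:ℕ) → σ x = x ∧ ε x = 1 := by
    intro x hx
    exact key (n-1-(x:ℕ)) (by have := x.isLt; omega) x (by have := x.isLt; omega)
  have sfix : ∀ x : Fin n, n - m ≤ (x:ℕ) → σ.symm x = x := by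
    intro x hx
    rw [Equiv.symm_apply_eq, (efix x hx).1]
  refine ⟨?_, ?_, ?_⟩
  · -- w fixes the roots α_{n-1-j}, j < m
    intro j hj
    obtain ⟨a, ha⟩ : ∃ a : Fin n, a = ⟨n-1-j, by omega⟩ := ⟨_, rfl⟩
    have hav : (a:ℕ) = n-1-j := by rw [ha]
    rw [← ha]
    funext x
    show ε x * bsimple n a (σ.symm x) = bsimple n a x
    have hxlt := x.isLt
    by_cases h1 : (x:ℕ) = n-1-j
    · have hxm : n - m ≤ (x:ℕ) := by omega
      rw [sfix x hxm, (efix x hxm).2, one_mul]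
    · by_cases h2 : (x:ℕ) = n-j
      · have hj1 : 1 ≤ j := by omega
        have hxm : n - m ≤ (x:ℕ) := by omega
        rw [sfix x hxm, (efix x hxm).2, one_mul]
      · have hslt := (σ.symm x).isLt
        have hs1 : ((σ.symm x : Fin n):ℕ) ≠ n-1-j := by
          intro hcon
          have hsa : σ.symm x = a := Fin.ext (by omega)
          rw [Equiv.symm_apply_eq, (key j hj a (by omega)).1] at hsa
          rw [hsa] at h1
          exact h1 hav
        have hs2 : ((σ.symm x : Fin n):ℕ) ≠ n-j := by
          intro hcon
          have hj1 : 1 ≤ j := by omega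
          obtain ⟨b, hb⟩ : ∃ b : Fin n, b = ⟨n-j, by omega⟩ := ⟨_, rfl⟩
          have hbv : (b:ℕ) = n-j := by rw [hb]
          have hsa : σ.symm x = b := Fin.ext (by omega)
          rw [Equiv.symm_apply_eq, (efix b (by omega)).1] at hsa
          rw [hsa] at h2
          exact h2 hbv
        simp only [bs_apply]
        split_ifs <;> omega
  · -- α_{n-1-m} ∉ J
    intro hmJ
    obtain ⟨c, hc⟩ : ∃ c : Fin n, c = ⟨n-1-m, by omega⟩ := ⟨_, rfl⟩
    have hcv : (c:ℕ) = n-1-m := by rw [hc]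
    have hcJ : c ∈ J := by rw [hc]; exact hmJ
    have hmem : bsimple n c ∈ bsimple n '' (J : Set (Fin n)) := ⟨_, hcJ, rfl⟩
    rw [← hw] at hmem
    obtain ⟨v, ⟨i, hiI, rfl⟩, hv⟩ := hmem
    -- hv : signedPermAct n σ ε (bsimple n i) = bsimple n c
    have hil := i.isLt
    have hiv : (i:ℕ) ≠ n-1-m := by
      intro hcon
      exact hmin (by
        have hie : i = (⟨n-1-m, by omega⟩ : Fin n) := Fin.ext hcon
        rwa [hie] at hiI)
    rcases Nat.eq_zero_or_pos m with rfl | hm1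
    · -- m = 0 : nothing can map to the short root
      have hi2 : (i:ℕ)+1 < n := by omega
      obtain ⟨t, ht⟩ : ∃ t : Fin n, t = ⟨(i:ℕ)+1, hi2⟩ := ⟨_, rfl⟩
      have htv : (t:ℕ) = (i:ℕ)+1 := by rw [ht]
      have e1 : ε (σ i) * bsimple n i (σ.symm (σ i)) = bsimple n c (σ i) := congrFun hv (σ i)
      have e2 : ε (σ t) * bsimple n i (σ.symm (σ t)) = bsimple n c (σ t) := congrFun hv (σ t)
      simp only [Equiv.symm_apply_apply, bs_apply] at e1 e2
      have ha1 := (σ i).isLt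
      have ha2 := (σ t).isLt
      have h1 : ((σ i : Fin n):ℕ) = n-1 := by
        rcases hε (σ i) with hh | hh <;> simp only [hh] at e1 <;> split_ifs at e1 <;> omega
      have h2 : ((σ t : Fin n):ℕ) = n-1 := by
        rcases hε (σ t) with hh | hh <;> simp only [hh] at e2 <;> split_ifs at e2 <;> omega
      have h3 := σ.injective (show σ i = σ t from Fin.ext (by omega))
      rw [Fin.ext_iff] at h3
      omega
    · -- m ≥ 1
      obtain ⟨b, hb⟩ : ∃ b : Fin n, b = ⟨n-m, by omega⟩ := ⟨_, rfl⟩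
      have hbv : (b:ℕ) = n-m := by rw [hb]
      have hsb : σ.symm b = b := sfix b (by omega)
      have heb : ε b = 1 := (efix b (by omega)).2
      have e1 : ε b * bsimple n i (σ.symm b) = bsimple n c b := congrFun hv b
      simp only [hsb, heb, one_mul, bs_apply] at e1
      split_ifs at e1 <;> omega
  · -- fixes e_i for i ≥ n-m
    intro i hi
    funext x
    show ε x * stdbasis n i (σ.symm x) = stdbasis n i x
    by_cases hx : x = i
    · subst hx
      rw [sfix x hi, (efix x hi).2, one_mul]
    · have hne : σ.symm x ≠ i := by
        intro hcon
        rw [Equiv.symm_apply_eq, (efix i hi).1] at hcon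
        exact hx hcon
      simp only [stdbasis]
      rw [if_neg hne, if_neg hx, mul_zero]
end
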